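/- Fix a > 0. As η → ∞, the projected flux matrices converge to the equilibrium splitting: A·P(η)⁻¹·diag(1,0)·P(η) → [[0,1],[0,1/a]] and A·P(η)⁻¹·diag(0,1)·P(η) → [[0,0],[1,−1/a]]. -/

import Mathlib

noncomputable def Mmat (a η : ℝ) : Matrix (Fin 2) (Fin 2) ℝ :=
  !![-η * a, 1 + η; 1, 0]

noncomputable def lamP (a η : ℝ) : ℝ :=
  (-(a * η) + Real.sqrt (a ^ 2 * η ^ 2 + 4 * (η + 1))) / 2

noncomputable def lamM (a η : ℝ) : ℝ :=
  (-(a * η) - Real.sqrt (a ^ 2 * η ^ 2 + 4 * (η + 1))) / 2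

noncomputable def Lp (a η : ℝ) : Fin 2 → ℝ :=
  (Real.sqrt ((1 + η) ^ 2 + lamP a η ^ 2))⁻¹ • ![lamP a η, 1 + η]

noncomputable def Lm (a η : ℝ) : Fin 2 → ℝ :=
  (Real.sqrt ((1 + η) ^ 2 + lamM a η ^ 2))⁻¹ • ![lamM a η, 1 + η]

noncomputable def eucNorm (v : Fin 2 → ℝ) : ℝ :=
  Real.sqrt (v 0 ^ 2 + v 1 ^ 2)

noncomputable def Pmat (a η : ℝ) : Matrix (Fin 2) (Fin 2) ℝ :=
  Matrix.of ![Lp a η, Lm a η]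

def Amat : Matrix (Fin 2) (Fin 2) ℝ := !![0, 1; 1, 0]

/-! The rows `(λ±, 1 + η)` of `P(η)` are rescaled left eigenvectors, and conjugating a diagonal
matrix does not see a rescaling of the rows. So `P⁻¹ diag(1,0) P` may be computed from the
unnormalised matrix `[[λ₊, 1 + η], [λ₋, 1 + η]]`. With `Δ = a²η² + 4(η + 1)` we have
`λ₊ - λ₋ = √Δ` and `λ₊ λ₋ = -(1 + η)`, so its entries become `1, -λ₋, λ₊, 1 + η` divided
by `√Δ`, and `√Δ ~ a η` gives the limit. The second projector is the complement
`1 - P⁻¹ diag(1,0) P`. -/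

open Filter Topology Matrix

theorem mul_inv_mul_conj_of_commute {n R : Type*} [Fintype n] [DecidableEq n] [CommRing R]
    (B S P D : Matrix n n R) (hS : IsUnit S.det) (hSD : Commute S D) :
    B * (S * P)⁻¹ * D * (S * P) = B * P⁻¹ * D * P :=
  calc B * (S * P)⁻¹ * D * (S * P) = B * P⁻¹ * (S⁻¹ * (S * D)) * P := by
        rw [hSD.eq]; simp only [Matrix.mul_inv_rev, Matrix.mul_assoc]
    _ = B * P⁻¹ * D * P := by rw [Matrix.nonsing_inv_mul_cancel_left _ _ hS]

theorem mul_inv_mul_one_sub {n R : Type*} [Fintype n] [DecidableEq n] [CommRing R]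
    (B P D : Matrix n n R) (hP : IsUnit P.det) :
    B * P⁻¹ * (1 - D) * P = B - B * P⁻¹ * D * P := by
  rw [Matrix.mul_sub, Matrix.sub_mul, Matrix.mul_one, Matrix.mul_assoc,
    Matrix.nonsing_inv_mul _ hP, Matrix.mul_one]

theorem amat_mul_inv_mul_eigenrows {p m c : ℝ} (hpm : p ≠ m) (hprod : p * m = -c) (hc : c ≠ 0) :
    Amat * !![p, c; m, c]⁻¹ * !![(1:ℝ), 0; 0, 0] * !![p, c; m, c] =
      !![1 / (p - m), -m / (p - m); p / (p - m), c / (p - m)] := by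
  have hd : p - m ≠ 0 := sub_ne_zero.2 hpm
  rw [Matrix.inv_def, Matrix.det_fin_two_of, Matrix.adjugate_fin_two_of, Ring.inverse_eq_inv']
  ext i j
  fin_cases i <;> fin_cases j <;> simp [Amat, Matrix.mul_apply, Fin.sum_univ_two] <;> field_simp
  linarith

theorem Filter.Tendsto.matrix_fin_two {α R : Type*} [TopologicalSpace R] {l : Filter α}
    {f₀₀ f₀₁ f₁₀ f₁₁ : α → R} {b₀₀ b₀₁ b₁₀ b₁₁ : R}
    (h₀₀ : Tendsto f₀₀ l (𝓝 b₀₀)) (h₀₁ : Tendsto f₀₁ l (𝓝 b₀₁))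
    (h₁₀ : Tendsto f₁₀ l (𝓝 b₁₀)) (h₁₁ : Tendsto f₁₁ l (𝓝 b₁₁)) :
    Tendsto (fun x => !![f₀₀ x, f₀₁ x; f₁₀ x, f₁₁ x]) l (𝓝 !![b₀₀, b₀₁; b₁₀, b₁₁]) :=
  tendsto_pi_nhds.2 fun i => tendsto_pi_nhds.2 fun j => by
    fin_cases i <;> fin_cases j <;> assumption

noncomputable def sqrtDisc (a η : ℝ) : ℝ := √(a ^ 2 * η ^ 2 + 4 * (η + 1))

section Eigenvalues

variable {a η : ℝ}

theorem lamP_eq : lamP a η = (-(a * η) + sqrtDisc a η) / 2 := rfl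

theorem lamM_eq : lamM a η = (-(a * η) - sqrtDisc a η) / 2 := rfl

theorem sqrtDisc_pos (hη : -1 < η) : 0 < sqrtDisc a η :=
  Real.sqrt_pos.2 (by nlinarith [sq_nonneg (a * η)])

theorem lamP_sub_lamM : lamP a η - lamM a η = sqrtDisc a η := by
  rw [lamP_eq, lamM_eq]; ring

theorem lamP_mul_lamM (hη : -1 ≤ η) : lamP a η * lamM a η = -(1 + η) := by
  have h : sqrtDisc a η ^ 2 = a ^ 2 * η ^ 2 + 4 * (η + 1) :=
    Real.sq_sqrt (by nlinarith [sq_nonneg (a * η)])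
  rw [lamP_eq, lamM_eq]
  linear_combination (-1 / 4 : ℝ) * h

end Eigenvalues

theorem Pmat_eq_diagonal_mul (a η : ℝ) :
    Pmat a η = diagonal ![(√((1 + η) ^ 2 + lamP a η ^ 2))⁻¹, (√((1 + η) ^ 2 + lamM a η ^ 2))⁻¹] *
      !![lamP a η, 1 + η; lamM a η, 1 + η] := by
  ext i j
  fin_cases i <;> fin_cases j <;> simp [Pmat, Lp, Lm]

section Flux

variable {a η : ℝ}

theorem isUnit_det_diagonal_normalization (hη : -1 < η) (x y : ℝ) :
    IsUnit (diagonal ![(√((1 + η) ^ 2 + x ^ 2))⁻¹, (√((1 + η) ^ 2 + y ^ 2))⁻¹]).det := by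
  have hx : 0 < √((1 + η) ^ 2 + x ^ 2) := Real.sqrt_pos.2 (by nlinarith [sq_nonneg x])
  have hy : 0 < √((1 + η) ^ 2 + y ^ 2) := Real.sqrt_pos.2 (by nlinarith [sq_nonneg y])
  simp [det_diagonal, Fin.prod_univ_two, hx.ne', hy.ne']

theorem isUnit_det_Pmat (hη : -1 < η) : IsUnit (Pmat a η).det := by
  have hdet : lamP a η * (1 + η) - (1 + η) * lamM a η = (1 + η) * sqrtDisc a η := by
    rw [← lamP_sub_lamM]; ring
  rw [Pmat_eq_diagonal_mul, det_mul, det_fin_two_of, hdet]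
  exact (isUnit_det_diagonal_normalization hη _ _).mul
    (isUnit_iff_ne_zero.2 (mul_ne_zero (by linarith) (sqrtDisc_pos hη).ne'))

theorem flux_first_eq (hη : -1 < η) :
    Amat * (Pmat a η)⁻¹ * !![(1:ℝ), 0; 0, 0] * Pmat a η =
      !![1 / sqrtDisc a η, -lamM a η / sqrtDisc a η;
        lamP a η / sqrtDisc a η, (1 + η) / sqrtDisc a η] := by
  have hgap : lamP a η ≠ lamM a η := by
    rw [← sub_ne_zero, lamP_sub_lamM]; exact (sqrtDisc_pos hη).ne'
  have hdiag : Commute (diagonal ![(√((1 + η) ^ 2 + lamP a η ^ 2))⁻¹,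
      (√((1 + η) ^ 2 + lamM a η ^ 2))⁻¹]) !![(1:ℝ), 0; 0, 0] := by
    rw [← diagonal_vec2]; exact commute_diagonal _ _
  rw [Pmat_eq_diagonal_mul, mul_inv_mul_conj_of_commute _ _ _ _
      (isUnit_det_diagonal_normalization hη _ _) hdiag,
    amat_mul_inv_mul_eigenrows hgap (lamP_mul_lamM hη.le) (by linarith), lamP_sub_lamM]

theorem flux_second_eq (hη : -1 < η) :
    Amat * (Pmat a η)⁻¹ * !![(0:ℝ), 0; 0, 1] * Pmat a η =
      Amat - Amat * (Pmat a η)⁻¹ * !![(1:ℝ), 0; 0, 0] * Pmat a η := by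
  rw [← mul_inv_mul_one_sub _ _ _ (isUnit_det_Pmat hη), one_fin_two]
  congr 3
  ext i j; fin_cases i <;> fin_cases j <;> simp

end Flux

theorem sqrtDisc_eq_mul_sqrt {a η : ℝ} (hη : 0 < η) :
    sqrtDisc a η = η * √(a ^ 2 + 4 * η⁻¹ + 4 * η⁻¹ ^ 2) := by
  rw [sqrtDisc, show a ^ 2 * η ^ 2 + 4 * (η + 1) = η ^ 2 * (a ^ 2 + 4 * η⁻¹ + 4 * η⁻¹ ^ 2) by
    field_simp; ring, Real.sqrt_mul (sq_nonneg η), Real.sqrt_sq hη.le]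

theorem tendsto_div_sqrtDisc {a : ℝ} (ha : 0 < a) :
    Tendsto (fun η => η / sqrtDisc a η) atTop (𝓝 a⁻¹) := by
  have hcont : ContinuousAt (fun x : ℝ => (√(a ^ 2 + 4 * x + 4 * x ^ 2))⁻¹) 0 :=
    (by fun_prop : Continuous fun x : ℝ => √(a ^ 2 + 4 * x + 4 * x ^ 2)).continuousAt.inv₀
      (by simp [Real.sqrt_sq ha.le, ha.ne'])
  have hval : (√(a ^ 2 + 4 * 0 + 4 * 0 ^ 2))⁻¹ = a⁻¹ := by simp [Real.sqrt_sq ha.le]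
  have h := hcont.tendsto.comp tendsto_inv_atTop_zero
  rw [hval] at h
  refine h.congr' ?_
  filter_upwards [eventually_gt_atTop 0] with η hη
  rw [Function.comp_apply, sqrtDisc_eq_mul_sqrt hη, div_mul_cancel_left₀ hη.ne']

theorem tendsto_flux_first {a : ℝ} (ha : 0 < a) :
    Tendsto (fun η => !![1 / sqrtDisc a η, -lamM a η / sqrtDisc a η;
        lamP a η / sqrtDisc a η, (1 + η) / sqrtDisc a η]) atTop (𝓝 !![0, 1; 0, 1 / a]) := by
  have hr := tendsto_div_sqrtDisc ha
  have hinv : Tendsto (fun η => 1 / sqrtDisc a η) atTop (𝓝 0) := by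
    have h := tendsto_inv_atTop_zero.mul hr
    rw [zero_mul] at h
    refine h.congr' ?_
    filter_upwards [eventually_gt_atTop 0] with η hη
    field_simp
  have hpos : ∀ᶠ η in atTop, sqrtDisc a η ≠ 0 :=
    (eventually_gt_atTop 0).mono fun η hη => (sqrtDisc_pos (by linarith)).ne'
  refine Tendsto.matrix_fin_two hinv ?_ ?_ ?_
  · have h := ((hr.const_mul a).const_add 1).div_const 2
    rw [mul_inv_cancel₀ ha.ne', one_add_one_eq_two, div_self two_ne_zero] at h
    refine h.congr' (hpos.mono fun η hη => ?_)
    simp only [lamM_eq]; field_simp; ring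
  · have h := ((hr.const_mul a).const_sub 1).div_const 2
    rw [mul_inv_cancel₀ ha.ne', sub_self, zero_div] at h
    refine h.congr' (hpos.mono fun η hη => ?_)
    simp only [lamP_eq]; field_simp; ring
  · have h := hinv.add hr
    rw [zero_add, ← one_div] at h
    exact h.congr fun η => by rw [add_div]

theorem stmt12 (a : ℝ) (ha : 0 < a) :
    Filter.Tendsto (fun η => Amat * (Pmat a η)⁻¹ * !![(1:ℝ), 0; 0, 0] * Pmat a η)
      Filter.atTop (nhds !![(0:ℝ), 1; 0, 1 / a]) ∧
    Filter.Tendsto (fun η => Amat * (Pmat a η)⁻¹ * !![(0:ℝ), 0; 0, 1] * Pmat a η)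
      Filter.atTop (nhds !![(0:ℝ), 0; 1, -1 / a]) := by
  have hfirst : Tendsto (fun η => Amat * (Pmat a η)⁻¹ * !![(1:ℝ), 0; 0, 0] * Pmat a η)
      atTop (𝓝 !![(0:ℝ), 1; 0, 1 / a]) :=
    (tendsto_flux_first ha).congr' <|
      (eventually_gt_atTop (-1)).mono fun η hη => (flux_first_eq hη).symm
  refine ⟨hfirst, ?_⟩
  have hlim : Amat - !![(0:ℝ), 1; 0, 1 / a] = !![(0:ℝ), 0; 1, -1 / a] := by
    ext i j; fin_cases i <;> fin_cases j <;> simp [Amat, neg_div]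
  rw [← hlim]
  exact (tendsto_const_nhds.sub hfirst).congr' <|
    (eventually_gt_atTop (-1)).mono fun η hη => (flux_second_eq hη).symm
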